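/- arXiv:1405.1484 — 2 statements merged into one kernel-verified Lean document; each statement's English description precedes it below -/
import Mathlib

section
/- Let n ≥ 3 be a prime and let G be the graph of Construction 1. For each k, l ∈ [n], the set P_k^l is an independent set of the square G² of G; that is, any two distinct vertices of P_k^l are at distance greater than 2 in G. -/
open SimpleGraph

/-- Entry of the Latin square `L_i`:  `L_i(j,k) ≡ j + i·(k-1) (mod n)`, with
indices and entries taken in `ZMod n` (identifying `[n] = {1,…,n}` with `ZMod n`). -/
def latinL (n : ℕ) (i j k : ZMod n) : ZMod n := j + i * (k - 1)

/-- The vertices of the graph `G` of Construction 1: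
`pv k m l` is `v_{k,m}^l ∈ P`, `qv i j` is `w_{i,j} ∈ Q` (with `i ≠ 0`, i.e. `i ∈ [n-1]`),
`rv i j` is `u_{i,j} ∈ R`, and `sv m` is `s_m ∈ S`. -/
inductive Vert (n : ℕ) : Type
  | pv (k m l : ZMod n) : Vert n
  | qv (i : {x : ZMod n // x ≠ 0}) (j : ZMod n) : Vert n
  | rv (i : {x : ZMod n // x ≠ 0}) (j : ZMod n) : Vert n
  | sv (m : ZMod n) : Vert n

/-- One-directional description of the edges of Construction 1:
`w_{i,j}` is adjacent to `v_{k, L_i(j,k)}^l` for all `k, l`;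
`u_{i,j}` is adjacent to every vertex of `T_{l, L_i(j,l)}` for every `l`;
`s_m` is adjacent to every vertex of `T_{l,m}` for every `l`. -/
def rel {n : ℕ} : Vert n → Vert n → Prop
  | .qv i j, .pv k m _ => m = latinL n i.1 j k
  | .rv i j, .pv _ m l => m = latinL n i.1 j l
  | .sv m', .pv _ m _ => m = m'
  | _, _ => False

/-- The bipartite graph `G` of Construction 1. -/
def GraphG (n : ℕ) : SimpleGraph (Vert n) where
  Adj x y := rel x y ∨ rel y x
  symm := ⟨fun _ _ h => h.symm⟩
  loopless := ⟨by intro x h; cases x <;> simp [rel] at h⟩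

/-- The square `G²` of a graph `G`: two distinct vertices are adjacent iff
their distance in `G` is at most 2 (i.e. they are adjacent or have a common neighbor). -/
def square {V : Type*} (G : SimpleGraph V) : SimpleGraph V where
  Adj x y := x ≠ y ∧ (G.Adj x y ∨ ∃ z, G.Adj x z ∧ G.Adj z y)
  symm := by
    constructor
    rintro x y ⟨hxy, h | ⟨z, h1, h2⟩⟩
    · exact ⟨hxy.symm, Or.inl h.symm⟩
    · exact ⟨hxy.symm, Or.inr ⟨z, h2.symm, h1.symm⟩⟩
  loopless := ⟨fun x h => h.1 rfl⟩

/-- `P_k^l = {v_{k,1}^l, …, v_{k,n}^l}`. -/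
def Pkl (n : ℕ) (k l : ZMod n) : Set (Vert n) := {x | ∃ m, x = Vert.pv k m l}

/-- `P^l = P_1^l ∪ ⋯ ∪ P_n^l`. -/
def PlSet (n : ℕ) (l : ZMod n) : Set (Vert n) := {x | ∃ k m, x = Vert.pv k m l}

/-- `P = P^1 ∪ ⋯ ∪ P^n`. -/
def Pset (n : ℕ) : Set (Vert n) := {x | ∃ k m l, x = Vert.pv k m l}

/-- `T_{l,m} = {v_{1,m}^l, …, v_{n,m}^l}`. -/
def Tlm (n : ℕ) (l m : ZMod n) : Set (Vert n) := {x | ∃ k, x = Vert.pv k m l}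

/-- `Q_i = {w_{i,1}, …, w_{i,n}}`. -/
def QiSet (n : ℕ) (i : {x : ZMod n // x ≠ 0}) : Set (Vert n) := {x | ∃ j, x = Vert.qv i j}

/-- `Q = Q_1 ∪ ⋯ ∪ Q_{n-1}`. -/
def Qset (n : ℕ) : Set (Vert n) := {x | ∃ i j, x = Vert.qv i j}

/-- `R_i = {u_{i,1}, …, u_{i,n}}`. -/
def RiSet (n : ℕ) (i : {x : ZMod n // x ≠ 0}) : Set (Vert n) := {x | ∃ j, x = Vert.rv i j}

/-- `R = R_1 ∪ ⋯ ∪ R_{n-1}`. -/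
def Rset (n : ℕ) : Set (Vert n) := {x | ∃ i j, x = Vert.rv i j}

/-- `S = {s_1, …, s_n}`. -/
def Sset (n : ℕ) : Set (Vert n) := {x | ∃ m, x = Vert.sv m}

/-- `G_l`, the subgraph of `G` induced by `P^l ∪ Q` (kept on the same vertex type:
all edges of `G` with both endpoints in `P^l ∪ Q`). -/
def Gl (n : ℕ) (l : ZMod n) : SimpleGraph (Vert n) where
  Adj x y := (GraphG n).Adj x y ∧ x ∈ PlSet n l ∪ Qset n ∧ y ∈ PlSet n l ∪ Qset n
  symm := ⟨fun _ _ ⟨h, hx, hy⟩ => ⟨h.symm, hy, hx⟩⟩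
  loopless := ⟨fun x h => (GraphG n).loopless.irrefl x h.1⟩

/-- `G` is `k`-choosable: for every list assignment with all lists of size at least `k`
there is a proper coloring choosing each color from the corresponding list. -/
def Choosable {V : Type*} (G : SimpleGraph V) (k : ℕ) : Prop :=
  ∀ L : V → Finset ℕ, (∀ v, k ≤ (L v).card) →
    ∃ φ : V → ℕ, (∀ v, φ v ∈ L v) ∧ ∀ ⦃v w⦄, G.Adj v w → φ v ≠ φ w

/-- The list chromatic number `χ_ℓ(G)`: the least `k` such that `G` is `k`-choosable. -/
noncomputable def listChromaticNumber {V : Type*} (G : SimpleGraph V) : ℕ :=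
  sInf {k | Choosable G k}

namespace Vert

variable {n : ℕ}

theorem not_rel_pv (k m l : ZMod n) (y : Vert n) : ¬ rel (pv k m l) y := by
  cases y <;> simp [rel]

theorem graphG_adj_pv_iff {k m l : ZMod n} {z : Vert n} :
    (GraphG n).Adj (pv k m l) z ↔ rel z (pv k m l) :=
  or_iff_right (not_rel_pv k m l z)

theorem not_graphG_adj_pv_pv (k m l k' m' l' : ZMod n) :
    ¬ (GraphG n).Adj (pv k m l) (pv k' m' l') :=
  fun h => not_rel_pv k' m' l' _ (graphG_adj_pv_iff.1 h)

/-- Every vertex has at most one neighbour in `P_k^l`. -/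
theorem eq_of_rel_pv_of_rel_pv {k m m' l : ZMod n} {z : Vert n}
    (h : rel z (pv k m l)) (h' : rel z (pv k m' l)) : m = m' := by
  cases z <;> simp only [rel] at h h' <;> rw [h, h']

end Vert

open Vert in
theorem stmt_6_general (n : ℕ) (k l : ZMod n) :
    ∀ x ∈ Pkl n k l, ∀ y ∈ Pkl n k l, x ≠ y → ¬ (square (GraphG n)).Adj x y := by
  rintro x ⟨m, rfl⟩ y ⟨m', rfl⟩ hxy ⟨-, hadj | ⟨z, hxz, hzy⟩⟩
  · exact not_graphG_adj_pv_pv k m l k m' l hadj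
  · have hm : m = m' :=
      eq_of_rel_pv_of_rel_pv (graphG_adj_pv_iff.1 hxz) (graphG_adj_pv_iff.1 hzy.symm)
    exact hxy (hm ▸ rfl)

/-- each `P_k^l` is an independent set of `G²`: any two distinct vertices
of `P_k^l` are non-adjacent in `G²` (i.e. at distance greater than 2 in `G`). -/
theorem stmt_6 (n : ℕ) (hn : n.Prime) (hn3 : 3 ≤ n) (k l : ZMod n) :
    ∀ x ∈ Pkl n k l, ∀ y ∈ Pkl n k l, x ≠ y → ¬ (square (GraphG n)).Adj x y :=
  stmt_6_general n k l
end

section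
/- Let n ≥ 3 be a prime and let G be the graph of Construction 1. For any distinct s, t ∈ [n] and any vertices v ∈ P^s and v' ∈ P^t, the vertices v and v' are adjacent in the square G²; in fact, v and v' have a common neighbor in G. -/
open SimpleGraph

/-! Only the layer `l` and the column `m` of a vertex `v_{k,m}^l` matter. Two vertices in the
same column share the neighbour `s_m`. Otherwise, since `ℤ/n` is a field and the layers differ,
there is exactly one line `m = j + i (l - 1)` through the points `(s, m)` and `(t, m')`; its
slope `i` is nonzero, so it is a Latin square `L_i`, and `u_{i,j}` is a common neighbour. -/

theorem square_adj_of_adj_of_adj {V : Type*} {G : SimpleGraph V} {x y z : V} (hxy : x ≠ y)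
    (hxz : G.Adj x z) (hyz : G.Adj y z) : (square G).Adj x y :=
  ⟨hxy, Or.inr ⟨z, hxz, hyz.symm⟩⟩

theorem exists_line_through {F : Type*} [Field F] {s t : F} (hst : s ≠ t) (m m' : F) :
    ∃ i j : F, (i = 0 ↔ m = m') ∧ m = j + i * (s - 1) ∧ m' = j + i * (t - 1) := by
  have hst' : s - t ≠ 0 := sub_ne_zero.mpr hst
  refine ⟨(m - m') / (s - t), m - (m - m') / (s - t) * (s - 1), ?_, by ring, ?_⟩
  · rw [div_eq_zero_iff, sub_eq_zero, sub_eq_zero]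
    exact or_iff_left hst
  · field_simp
    ring

namespace Vert

variable {n : ℕ}

theorem graphG_adj_sv (k m l : ZMod n) : (GraphG n).Adj (pv k m l) (sv m) :=
  Or.inr rfl

theorem graphG_adj_rv (k l : ZMod n) (i : {x : ZMod n // x ≠ 0}) (j : ZMod n) :
    (GraphG n).Adj (pv k (latinL n i.1 j l) l) (rv i j) :=
  Or.inr rfl

theorem exists_graphG_common_neighbor [Fact n.Prime] {s t : ZMod n} (hst : s ≠ t)
    (k k' m m' : ZMod n) :
    ∃ z, (GraphG n).Adj (pv k m s) z ∧ (GraphG n).Adj (pv k' m' t) z := by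
  by_cases hm : m = m'
  · subst hm
    exact ⟨sv m, graphG_adj_sv k m s, graphG_adj_sv k' m t⟩
  · obtain ⟨i, j, hi, rfl, rfl⟩ := exists_line_through hst m m'
    have hi0 : i ≠ 0 := mt hi.mp hm
    exact ⟨rv ⟨i, hi0⟩ j, graphG_adj_rv k s ⟨i, hi0⟩ j, graphG_adj_rv k' t ⟨i, hi0⟩ j⟩

end Vert

theorem stmt_12_general (n : ℕ) (hn : n.Prime) (s t : ZMod n) (hst : s ≠ t)
    (v v' : Vert n) (hv : v ∈ PlSet n s) (hv' : v' ∈ PlSet n t) :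
    (square (GraphG n)).Adj v v' ∧ ∃ z, (GraphG n).Adj v z ∧ (GraphG n).Adj v' z := by
  obtain ⟨k, m, rfl⟩ := hv
  obtain ⟨k', m', rfl⟩ := hv'
  have : Fact n.Prime := ⟨hn⟩
  have hne : Vert.pv k m s ≠ Vert.pv k' m' t := fun h => hst (Vert.pv.inj h).2.2
  obtain ⟨z, hz, hz'⟩ := Vert.exists_graphG_common_neighbor hst k k' m m'
  exact ⟨square_adj_of_adj_of_adj hne hz hz', z, hz, hz'⟩

/-- for distinct `s, t ∈ [n]` and any `v ∈ P^s`, `v' ∈ P^t`, the vertices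
`v` and `v'` are adjacent in `G²`; in fact they have a common neighbor in `G`. -/
theorem stmt_12 (n : ℕ) (hn : n.Prime) (hn3 : 3 ≤ n) (s t : ZMod n) (hst : s ≠ t)
    (v v' : Vert n) (hv : v ∈ PlSet n s) (hv' : v' ∈ PlSet n t) :
    (square (GraphG n)).Adj v v' ∧ ∃ z, (GraphG n).Adj v z ∧ (GraphG n).Adj v' z :=
  stmt_12_general n hn s t hst v v' hv hv'
end
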